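/- For every threshold t and independent nonnegative random variables v_1,...,v_n, the expected value obtained by the t-threshold stopping rule is at least (1-q(t))·t + q(t)·∑_{i=1}^n E[(v_i - t)^+], where q(t) = Pr[v_i < t for all i]. -/

import Mathlib

open MeasureTheory ProbabilityTheory

/-!
The payoff of the `t`-threshold rule splits as `t` on the event that some prize reaches `t`,
plus the excess `(vᵢ - t)⁺` on the event that no prize before `i` reaches `t` (an earlier
prize below `t` has no excess, and a later one is never inspected). That event is determined by
`v₁, …, vᵢ₋₁`, so it is independent of `vᵢ`, and it contains the event that all prizes are
below `t`, whose probability is `q(t)`.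
-/

/-- The value obtained by the `t`-threshold stopping rule: accept the first prize `i`
with `v i ≥ t` (obtaining `v i`), and obtain `0` if no prize meets the threshold. -/
noncomputable def thresholdPayoff {Ω : Type*} {n : ℕ} (t : ℝ) (v : Fin n → Ω → ℝ) (ω : Ω) : ℝ :=
  match Fin.find? (fun i => decide (t ≤ v i ω)) with
  | some i => v i ω
  | none => 0

theorem ProbabilityTheory.iIndepFun.indepFun_finset_of_notMem {Ω ι : Type*} {β : ι → Type*}
    [MeasurableSpace Ω] [∀ i, MeasurableSpace (β i)] {μ : Measure Ω} {f : ∀ i, Ω → β i}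
    (hf : iIndepFun f μ) (hmeas : ∀ i, Measurable (f i)) {i : ι} {T : Finset ι} (hi : i ∉ T) :
    IndepFun (f i) (fun ω (j : T) => f j ω) μ :=
  (hf.indepFun_finset {i} T (Finset.disjoint_singleton_left.2 hi) hmeas).comp
    (measurable_pi_apply (⟨i, Finset.mem_singleton_self i⟩ : ({i} : Finset ι))) measurable_id

section

variable {Ω : Type*} {n : ℕ}

lemma thresholdPayoff_eq_indicator_add_sum (t : ℝ) (v : Fin n → Ω → ℝ) (ω : Ω) :
    thresholdPayoff t v ω =
      {ω | ∀ i, v i ω < t}ᶜ.indicator (fun _ => t) ω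
        + ∑ i, {ω | ∀ j < i, v j ω < t}.indicator (fun ω => max (v i ω - t) 0) ω := by
  have below : ∀ i, v i ω < t → max (v i ω - t) 0 = 0 := fun i h => max_eq_right (by linarith)
  unfold thresholdPayoff
  rcases h : Fin.find? (fun i => decide (t ≤ v i ω)) with _ | i
  · simp only [Fin.find?_eq_none_iff, decide_eq_false_iff_not, not_le] at h
    simp [h, below]
  · simp only [Fin.find?_eq_some_iff, decide_eq_true_eq, decide_eq_false_iff_not, not_le] at h
    obtain ⟨hi, hmin⟩ := h
    rw [Finset.sum_eq_single i]
    · rw [Set.indicator_of_mem (fun hQ => (hQ i).not_ge hi),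
        Set.indicator_of_mem (Set.mem_ofPred.2 hmin), max_eq_left (sub_nonneg.2 hi), add_sub_cancel]
    · intro j _ hji
      rcases hji.lt_or_gt with hj | hj
      · simp [below j (hmin j hj)]
      · exact Set.indicator_of_notMem (fun hA => (hA i hj).not_ge hi) _
    · simp

variable [MeasurableSpace Ω] {μ : Measure Ω} {v : Fin n → Ω → ℝ}

lemma ProbabilityTheory.iIndepFun.setIntegral_earlier_lt_eq_measureReal_mul
    (hindep : iIndepFun v μ) (hmeas : ∀ i, Measurable (v i)) (t : ℝ) (i : Fin n)
    {f : ℝ → ℝ} (hf : Measurable f) :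
    ∫ ω in {ω | ∀ j < i, v j ω < t}, f (v i ω) ∂μ
      = μ.real {ω | ∀ j < i, v j ω < t} * ∫ ω, f (v i ω) ∂μ := by
  set earlier := fun ω (j : Finset.Iio i) => v j ω
  have hearlier : Measurable earlier := measurable_pi_lambda _ fun j => hmeas j
  have hset : {ω | ∀ j < i, v j ω < t} = earlier ⁻¹' {x | ∀ j, x j < t} := by
    ext ω; simp [earlier]
  have hindepEarlier : Indep (MeasurableSpace.comap earlier inferInstance)
      (MeasurableSpace.comap (v i) inferInstance) μ :=
    ((IndepFun_iff_Indep _ _ _).1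
      (hindep.indepFun_finset_of_notMem hmeas Finset.notMem_Iio_self)).symm
  rw [hset]
  exact hindepEarlier.setIntegral_eq_mul hearlier.comap_le (hmeas i).aemeasurable
    ⟨_, by measurability, rfl⟩ hf.aestronglyMeasurable

lemma integral_thresholdPayoff [IsProbabilityMeasure μ] (hindep : iIndepFun v μ)
    (hmeas : ∀ i, Measurable (v i)) (hint : ∀ i, Integrable (v i) μ) (t : ℝ) :
    ∫ ω, thresholdPayoff t v ω ∂μ
      = (1 - μ.real {ω | ∀ i, v i ω < t}) * t
        + ∑ i, μ.real {ω | ∀ j < i, v j ω < t} * ∫ ω, max (v i ω - t) 0 ∂μ := by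
  have hQ : MeasurableSet {ω | ∀ i, v i ω < t} := by measurability
  have hA : ∀ i : Fin n, MeasurableSet {ω | ∀ j < i, v j ω < t} := fun i => by measurability
  have hexcess : ∀ i, Integrable (fun ω => max (v i ω - t) 0) μ :=
    fun i => ((hint i).sub (integrable_const t)).pos_part
  simp_rw [thresholdPayoff_eq_indicator_add_sum]
  rw [integral_add ((integrable_const t).indicator hQ.compl)
      (integrable_finsetSum _ fun i _ => (hexcess i).indicator (hA i)),
    integral_finsetSum _ fun i _ => (hexcess i).indicator (hA i),
    integral_indicator_const t hQ.compl, smul_eq_mul, probReal_compl_eq_one_sub hQ]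
  congr 1
  refine Finset.sum_congr rfl fun i _ => ?_
  rw [integral_indicator (hA i)]
  exact hindep.setIntegral_earlier_lt_eq_measureReal_mul hmeas t i
    (f := fun x => max (x - t) 0) (by fun_prop)

end

theorem threshold_rule_lower_bound_general {Ω : Type*} [MeasurableSpace Ω] (μ : Measure Ω)
    [IsProbabilityMeasure μ] {n : ℕ} (t : ℝ) (v : Fin n → Ω → ℝ)
    (hmeas : ∀ i, Measurable (v i))
    (hindep : iIndepFun v μ)
    (hint : ∀ i, Integrable (v i) μ) :
    (1 - (μ {ω | ∀ i, v i ω < t}).toReal) * t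
      + (μ {ω | ∀ i, v i ω < t}).toReal * ∑ i, ∫ ω, max (v i ω - t) 0 ∂μ
      ≤ ∫ ω, thresholdPayoff t v ω ∂μ := by
  rw [integral_thresholdPayoff hindep hmeas hint t, Finset.mul_sum, ← measureReal_def]
  gcongr _ + ∑ i, ?_ * _ with i
  exact measureReal_mono fun ω hω j _ => hω j

/-- For every threshold `t`, the expected value of the `t`-threshold rule is at least
`(1 - q(t))·t + q(t)·∑ᵢ E[(vᵢ - t)⁺]`, where `q(t)` is the probability that no prize
value reaches `t`. -/
theorem threshold_rule_lower_bound {Ω : Type*} [MeasurableSpace Ω] (μ : Measure Ω)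
    [IsProbabilityMeasure μ] {n : ℕ} (t : ℝ) (v : Fin n → Ω → ℝ)
    (hmeas : ∀ i, Measurable (v i))
    (hnonneg : ∀ i ω, 0 ≤ v i ω)
    (hindep : iIndepFun v μ)
    (hint : ∀ i, Integrable (v i) μ)
    (hintpay : Integrable (thresholdPayoff t v) μ) :
    (1 - (μ {ω | ∀ i, v i ω < t}).toReal) * t
      + (μ {ω | ∀ i, v i ω < t}).toReal * ∑ i, ∫ ω, max (v i ω - t) 0 ∂μ
      ≤ ∫ ω, thresholdPayoff t v ω ∂μ :=
  threshold_rule_lower_bound_general μ t v hmeas hindep hint
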